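/- arXiv:1505.07606 — 6 statements merged into one kernel-verified Lean document; each statement's English description precedes it below -/
import Mathlib

section
/- Let F be a (λ,ω)-elliptic operator on C(V) with orthogonal Green operator G (so G∘F = F∘G = I − P_ω on C(V), where P_ω is the orthogonal projection onto ω). Let σ ∈ C(V) be nonzero with λ = 0 and ⟨σ,ω⟩ = 0, and set H_σ = F + P_σ where P_σ(u) = ⟨σ,u⟩σ. Then the orthogonal Green operator of H_σ equals G − (1/(1+⟨G(σ),σ⟩)) P_{G(σ)}, where P_{G(σ)}(u) = ⟨G(σ),u⟩G(σ). -/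
open Finset

noncomputable def ip {V : Type*} [Fintype V] (u v : V → ℝ) : ℝ := ∑ x, u x * v x

section helpers
variable {V : Type*} [Fintype V]

lemma ip_comm (u v : V → ℝ) : ip u v = ip v u := by
  simp [ip, mul_comm]

lemma ip_sub_left (u v w : V → ℝ) : ip (u - v) w = ip u w - ip v w := by
  simp [ip, sub_mul, Finset.sum_sub_distrib]

lemma ip_add_left (u v w : V → ℝ) : ip (u + v) w = ip u w + ip v w := by
  simp [ip, add_mul, Finset.sum_add_distrib]

lemma ip_smul_left (c : ℝ) (u v : V → ℝ) : ip (c • u) v = c * ip u v := by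
  simp [ip, Finset.mul_sum, mul_assoc]

lemma ip_sub_right (u v w : V → ℝ) : ip u (v - w) = ip u v - ip u w := by
  rw [ip_comm, ip_sub_left, ip_comm v u, ip_comm w u]

lemma ip_smul_right (c : ℝ) (u v : V → ℝ) : ip u (c • v) = c * ip u v := by
  rw [ip_comm, ip_smul_left, ip_comm]

lemma ip_zero_left (v : V → ℝ) : ip 0 v = 0 := by simp [ip]

end helpers

/-- If `F` is a `(0,ω)`-elliptic operator with orthogonal Green operator `G`, `σ ≠ 0` with
`⟨σ,ω⟩ = 0`, then the orthogonal Green operator of `H_σ = F + P_σ` is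
`G − (1/(1+⟨G(σ),σ⟩)) P_{G(σ)}`. -/
theorem stmt1 {V : Type*} [Fintype V]
    (F : (V → ℝ) →ₗ[ℝ] (V → ℝ)) (ω σ : V → ℝ)
    (G G' : (V → ℝ) → (V → ℝ))
    -- F is (0,ω)-elliptic
    (hsa : ∀ u v, ip (F u) v = ip u (F v))
    (hpsd : ∀ u, 0 ≤ ip (F u) u)
    (hunit : ip ω ω = 1)
    (heig : F ω = 0)
    (hsimple : ∀ u : V → ℝ, F u = 0 → ∃ a : ℝ, u = a • ω)
    -- G is the orthogonal Green operator of F : G∘F = F∘G = I − P_ω, G(ω)=0, range G ⊆ ω^⊥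
    (hGF : ∀ u, G (F u) = u - ip ω u • ω)
    (hFG : ∀ u, F (G u) = u - ip ω u • ω)
    (hGω : G ω = 0)
    (hGorth : ∀ u, ip (G u) ω = 0)
    -- σ is nonzero and orthogonal to ω
    (hσ : σ ≠ 0) (hσω : ip σ ω = 0)
    -- G' is the orthogonal Green operator of H_σ = F + P_σ
    (hG'F : ∀ u, G' (F u + ip σ u • σ) = u - ip ω u • ω)
    (hFG' : ∀ u, F (G' u) + ip σ (G' u) • σ = u - ip ω u • ω)
    (hG'ω : G' ω = 0)
    (hG'orth : ∀ u, ip (G' u) ω = 0) :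
    ∀ f : V → ℝ, G' f = G f - (1 / (1 + ip (G σ) σ)) • (ip (G σ) f • G σ) := by
  have hωσ : ip ω σ = 0 := by rw [ip_comm]; exact hσω
  -- F (G σ) = σ
  have hFGσ : F (G σ) = σ := by
    rw [hFG, hωσ]; simp
  -- ⟨G σ, σ⟩ ≥ 0
  have hGσσ : 0 ≤ ip (G σ) σ := by
    have := hpsd (G σ)
    rwa [hFGσ, ip_comm] at this
  set c : ℝ := 1 + ip (G σ) σ with hc_def
  have hc : c ≠ 0 := by positivity
  -- symmetry of G against σ
  have hsym : ∀ f : V → ℝ, ip σ (G f) = ip (G σ) f := by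
    intro f
    calc ip σ (G f) = ip (F (G σ)) (G f) := by rw [hFGσ]
      _ = ip (G σ) (F (G f)) := hsa _ _
      _ = ip (G σ) f := by
          rw [hFG, ip_sub_right, ip_smul_right, hGorth]; ring
  intro f
  set k : V → ℝ := G f - (1 / c) • (ip (G σ) f • G σ) with hk_def
  have hipσk : ip σ k = (1 / c) * ip (G σ) f := by
    rw [hk_def, ip_sub_right, ip_smul_right, ip_smul_right, hsym, hsym]
    have : ip (G σ) σ = c - 1 := by rw [hc_def]; ring
    rw [this]
    field_simp
    ring
  -- H_σ k = f - ⟨ω,f⟩ω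
  have hHk : F k + ip σ k • σ = f - ip ω f • ω := by
    rw [hipσk, hk_def]
    rw [map_sub, map_smul, map_smul, hFG, hFG, hωσ]
    ext x
    simp [smul_smul]
  -- ⟨k, ω⟩ = 0
  have hkω : ip k ω = 0 := by
    rw [hk_def, ip_sub_left, ip_smul_left, ip_smul_left, hGorth, hGorth]
    ring
  -- u := G' f - k
  set u : V → ℝ := G' f - k with hu_def
  have hHu : F u + ip σ u • σ = 0 := by
    rw [hu_def, map_sub, ip_sub_right]
    have h1 := hFG' f
    ext x
    have e1 : F (G' f) x + ip σ (G' f) * σ x = f x - ip ω f * ω x := by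
      have := congrFun h1 x; simpa using this
    have e2 : F k x + ip σ k * σ x = f x - ip ω f * ω x := by
      have := congrFun hHk x; simpa using this
    simp only [Pi.add_apply, Pi.sub_apply, Pi.smul_apply, smul_eq_mul, Pi.zero_apply]
    nlinarith [e1, e2]
  -- ⟨σ, u⟩ = 0 and F u = 0
  have hσu : ip σ u = 0 := by
    have h0 : ip (F u + ip σ u • σ) u = 0 := by rw [hHu, ip_zero_left]
    rw [ip_add_left, ip_smul_left, ip_comm σ u] at h0
    have h1 := hpsd u
    have h2 : 0 ≤ ip u σ * ip u σ := mul_self_nonneg _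
    have : ip u σ = 0 := by nlinarith [h0, h1, h2, ip_comm u σ]
    rw [ip_comm]; exact this
  have hFu : F u = 0 := by
    have := hHu
    rw [hσu] at this
    simpa using this
  obtain ⟨a, ha⟩ := hsimple u hFu
  have huω : ip u ω = 0 := by
    rw [hu_def, ip_sub_left, hG'orth, hkω]; ring
  have ha0 : a = 0 := by
    rw [ha, ip_smul_left, hunit] at huω
    simpa using huω
  have hu0 : u = 0 := by rw [ha, ha0]; simp
  rw [hu_def, sub_eq_zero] at hu0
  exact hu0
end

section
/- Let Γ = (V,E,c) be a finite connected network with Laplacian L, and let ω be a weight on V. Then the Schrödinger operator L_{q_ω} with potential q_ω = −L(ω)/ω is singular, and L_{q_ω}(v) = 0 if and only if v = aω for some a ∈ ℝ. -/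
open Finset

noncomputable def lap {V : Type*} [Fintype V] (c : V → V → ℝ) (u : V → ℝ) : V → ℝ :=
  fun x => ∑ y, c x y * (u x - u y)

/-- On a finite connected network, the Schrödinger operator `L_{q_ω}` with potential
`q_ω = −L(ω)/ω` is singular, and its kernel is exactly the multiples of `ω`. -/
theorem stmt6 {V : Type*} [Fintype V] [Nonempty V]
    (c : V → V → ℝ) (ω : V → ℝ)
    (hc_symm : ∀ x y, c x y = c y x)
    (hc_nonneg : ∀ x y, 0 ≤ c x y)
    (hc_diag : ∀ x, c x x = 0)
    (hconn : ∀ x y : V, Relation.ReflTransGen (fun a b => 0 < c a b) x y)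
    (hω_pos : ∀ x, 0 < ω x)
    (hω_unit : ∑ x, (ω x) ^ 2 = 1) :
    (∃ v : V → ℝ, v ≠ 0 ∧ (fun x => lap c v x + (-(lap c ω x) / ω x) * v x) = 0) ∧
      ∀ v : V → ℝ,
        ((fun x => lap c v x + (-(lap c ω x) / ω x) * v x) = 0 ↔ ∃ a : ℝ, v = a • ω) := by
  have hω_ne : ∀ x, ω x ≠ 0 := fun x => (hω_pos x).ne'
  -- lap is "linear" on multiples of ω
  have lap_smul : ∀ (a : ℝ) (x : V), lap c (a • ω) x = a * lap c ω x := by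
    intro a x
    simp only [lap, Pi.smul_apply, smul_eq_mul, Finset.mul_sum]
    exact Finset.sum_congr rfl (fun y _ => by ring)
  have kernel : ∀ a : ℝ,
      (fun x => lap c (a • ω) x + (-(lap c ω x) / ω x) * (a • ω) x) = 0 := by
    intro a
    funext x
    simp only [Pi.zero_apply, lap_smul, Pi.smul_apply, smul_eq_mul]
    field_simp [hω_ne x]
    ring
  constructor
  · refine ⟨ω, ?_, ?_⟩
    · intro h
      have := congrFun h (Classical.arbitrary V)
      exact (hω_pos _).ne' this
    · have h := kernel 1
      simpa using h
  · intro v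
    constructor
    · intro hv
      -- key pointwise identity
      have key : ∀ x, ∑ y, c x y * (v x * ω y - v y * ω x) = 0 := by
        intro x
        have h2 := congrFun hv x
        simp only [Pi.zero_apply] at h2
        have h3 : ω x * (lap c v x + -(lap c ω x) / ω x * v x)
            = ω x * lap c v x - lap c ω x * v x := by
          field_simp [hω_ne x]
          ring
        rw [h2, mul_zero] at h3
        calc ∑ y, c x y * (v x * ω y - v y * ω x)
            = ω x * lap c v x - lap c ω x * v x := by
              simp only [lap, Finset.mul_sum, Finset.sum_mul, ← Finset.sum_sub_distrib]
              exact Finset.sum_congr rfl (fun y _ => by ring)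
          _ = 0 := h3.symm
      -- maximum of v/ω
      obtain ⟨x0, -, hx0⟩ := Finset.exists_max_image Finset.univ (fun x => v x / ω x)
        ⟨Classical.arbitrary V, Finset.mem_univ _⟩
      -- step lemma: at a maximum point, neighbors have the same ratio
      have step : ∀ b z, (∀ a, v a / ω a ≤ v b / ω b) → 0 < c b z →
          v z / ω z = v b / ω b := by
        intro b z hmax hbz
        have hterm : ∀ y ∈ Finset.univ, 0 ≤ c b y * (v b * ω y - v y * ω b) := by
          intro y _
          apply mul_nonneg (hc_nonneg b y)
          have := (div_le_div_iff₀ (hω_pos y) (hω_pos b)).mp (hmax y)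
          linarith
        have hz := (Finset.sum_eq_zero_iff_of_nonneg hterm).mp (key b) z (Finset.mem_univ z)
        have h4 : v b * ω z - v z * ω b = 0 := by
          rcases mul_eq_zero.mp hz with h | h
          · exact absurd h hbz.ne'
          · exact h
        rw [div_eq_div_iff (hω_ne z) (hω_ne b)]
        linarith
      have hall : ∀ y, v y / ω y = v x0 / ω x0 := by
        intro y
        induction hconn x0 y with
        | refl => rfl
        | @tail b z _ hbz ih =>
          have hmaxb : ∀ a, v a / ω a ≤ v b / ω b := by
            rw [ih]; exact fun a => hx0 a (Finset.mem_univ a)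
          exact (step b z hmaxb hbz).trans ih
      refine ⟨v x0 / ω x0, ?_⟩
      funext y
      have h := hall y
      rw [div_eq_div_iff (hω_ne y) (hω_ne x0)] at h
      have : v y = v x0 / ω x0 * ω y := by
        rw [div_mul_eq_mul_div, eq_div_iff (hω_ne x0)]
        linarith
      simpa [Pi.smul_apply, smul_eq_mul] using this
    · rintro ⟨a, rfl⟩
      exact kernel a
end

section
/- Let Γ' be obtained from a finite connected network Γ = (V,E,c) by adding a new vertex x' joined to vertices x_1,…,x_m ∈ V with conductances a_1,…,a_m > 0. Fix λ ≥ 0, a weight ω on V, ω(x') > 0, and define ω'(x) = ω(x)/√(1+ω(x')²) on V' = V ∪ {x'}. Let q = q_ω + λ on V and p = q_{ω'} + λ on V'. With ρ_i = √(a_i ω(x_i) ω(x')), σ_i = (ρ_i/ω(x_i)) ε_{x_i}, σ = Σ_{i=1}^m a_i ε_{x_i}, and α = λ + (1/ω(x')²) Σ_{i=1}^m ρ_i², the Schrödinger operator L'_p of Γ' satisfies: for u ∈ C(V') and x ∈ V, L'_p u(x) = (L_q + Σ_{i=1}^m P_{σ_i})(u|_V)(x) − u(x')σ(x), and L'_p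 u(x') = α u(x') − ⟨σ, u|_V⟩. -/
open Finset

/-- Conductance of the network `Γ'` obtained by joining a new vertex (`none`) to the
vertices `x 1, …, x m` with conductances `a 1, …, a m`. -/
noncomputable def cnew {V : Type*} [DecidableEq V] {m : ℕ}
    (c : V → V → ℝ) (x : Fin m → V) (a : Fin m → ℝ) : Option V → Option V → ℝ
  | some y, some z => c y z
  | some y, none => ∑ i, if y = x i then a i else 0
  | none, some z => ∑ i, if z = x i then a i else 0
  | none, none => 0

/-!
A direct computation. At a vertex `y ∈ V` the Laplacian of `Γ'` is that of `Γ` plus the new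
edge term `σ(y) (u(y) − u(x'))`, and at `x'` it is `Σ a_i (u(x') − u(x_i))`. The potential
`q_ω = −L(ω)/ω` is invariant under rescaling `ω`, so the factor `√(1 + ω(x')²)` in `ω'` drops
out of `p`; the extra diagonal term `σ(y) ω(x')/ω(y)` of `p` is exactly `Σ P_{σ_i}`, since
`ρ_i² / ω(x_i)² = a_i ω(x') / ω(x_i)`.
-/

section

variable {V : Type*} [Fintype V]

theorem lap_div_const (c : V → V → ℝ) (f : V → ℝ) (s : ℝ) (v : V) :
    lap c (fun z => f z / s) v = lap c f v / s := by
  simp only [lap, ← sub_div, mul_div_assoc', sum_div]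

theorem neg_lap_div_self_div_const (c : V → V → ℝ) (f : V → ℝ) {s : ℝ} (hs : s ≠ 0) (v : V) :
    -lap c (fun z => f z / s) v / (f v / s) = -lap c f v / f v := by
  rw [lap_div_const, neg_div, div_div_div_cancel_right₀ hs, neg_div]

theorem ip_const_mul_indicator [DecidableEq V] (r : ℝ) (p : V) (v : V → ℝ) :
    ip (fun z => r * if z = p then 1 else 0) v = r * v p := by
  simp [ip]

end

section NewVertex

variable {V : Type*} [Fintype V] [DecidableEq V] {m : ℕ}
  (c : V → V → ℝ) (x : Fin m → V) (a : Fin m → ℝ)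

theorem sum_sum_ite_eq_mul (f : V → ℝ) :
    ∑ y, (∑ i, if y = x i then a i else 0) * f y = ∑ i, a i * f (x i) := by
  simp only [sum_mul, ite_mul, zero_mul]
  rw [sum_comm]
  simp

theorem lap_cnew_some (u : Option V → ℝ) (y : V) :
    lap (cnew c x a) u (some y) = lap c (fun z => u (some z)) y
      + (∑ i, if y = x i then a i else 0) * (u (some y) - u none) := by
  simp only [lap, Fintype.sum_option, cnew]
  ring

theorem lap_cnew_none (u : Option V → ℝ) :
    lap (cnew c x a) u none = ∑ i, a i * (u none - u (some (x i))) := by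
  simp only [lap, Fintype.sum_option, cnew, zero_mul, zero_add]
  exact sum_sum_ite_eq_mul x a _

theorem sum_ip_indicator_mul_indicator (ω : V → ℝ) (w' : ℝ) (ρ : Fin m → ℝ)
    (hρ : ∀ i, ρ i ^ 2 = a i * ω (x i) * w') (hω : ∀ i, ω (x i) ≠ 0) (v : V → ℝ) (y : V) :
    ∑ i, ip (fun z => ρ i / ω (x i) * (if z = x i then 1 else 0)) v
        * (ρ i / ω (x i) * (if y = x i then 1 else 0))
      = (∑ i, if y = x i then a i else 0) * (w' / ω y) * v y := by
  simp only [ip_const_mul_indicator, sum_mul]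
  refine sum_congr rfl fun i _ => ?_
  split_ifs with h
  · subst h
    have := hω i
    field_simp
    linear_combination v (x i) * hρ i
  · simp

end NewVertex

theorem stmt7_general {V : Type*} [Fintype V] [DecidableEq V] {m : ℕ}
    (c : V → V → ℝ) (ω : V → ℝ) (lam w' : ℝ) (x : Fin m → V) (a : Fin m → ℝ)
    -- ω a unit weight, λ ≥ 0, ω(x') > 0, conductances a_i > 0 to distinct vertices
    (hω_pos : ∀ y, 0 < ω y)
    (hw' : 0 < w')
    (ha : ∀ i, 0 < a i) :
    ∀ u : Option V → ℝ,
      (∀ y : V,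
        lap (cnew c x a) u (some y)
          + (-(lap (cnew c x a)
                  (fun z => z.elim w' ω / Real.sqrt (1 + w' ^ 2)) (some y))
              / (ω y / Real.sqrt (1 + w' ^ 2)) + lam) * u (some y)
        = (lap c (fun z => u (some z)) y + (-(lap c ω y) / ω y + lam) * u (some y))
          + (∑ i, ip (fun z => (Real.sqrt (a i * ω (x i) * w') / ω (x i)) *
                (if z = x i then 1 else 0)) (fun z => u (some z))
              * ((Real.sqrt (a i * ω (x i) * w') / ω (x i)) *
                (if y = x i then 1 else 0)))
          - u none * (∑ i, a i * (if y = x i then 1 else 0))) ∧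
      (lap (cnew c x a) u none
          + (-(lap (cnew c x a)
                  (fun z => z.elim w' ω / Real.sqrt (1 + w' ^ 2)) none)
              / (w' / Real.sqrt (1 + w' ^ 2)) + lam) * u none
        = (lam + (1 / w' ^ 2) * ∑ i, Real.sqrt (a i * ω (x i) * w') ^ 2) * u none
          - ip (fun z => ∑ i, a i * (if z = x i then 1 else 0)) (fun z => u (some z))) := by
  intro u
  have hs : Real.sqrt (1 + w' ^ 2) ≠ 0 := (Real.sqrt_pos.mpr (by positivity)).ne'
  have hρ : ∀ i, Real.sqrt (a i * ω (x i) * w') ^ 2 = a i * ω (x i) * w' := fun i =>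
    Real.sq_sqrt (mul_nonneg (mul_nonneg (ha i).le (hω_pos _).le) hw'.le)
  have hpot := neg_lap_div_self_div_const (cnew c x a) (fun z => z.elim w' ω) hs
  constructor
  · intro y
    have hω := (hω_pos y).ne'
    have hpot_y := hpot (some y)
    simp only [Option.elim_some] at hpot_y
    rw [hpot_y, lap_cnew_some, lap_cnew_some,
      sum_ip_indicator_mul_indicator x a ω w' _ hρ fun i => (hω_pos (x i)).ne']
    simp only [Option.elim_some, Option.elim_none, mul_ite, mul_one, mul_zero]
    field_simp
    ring
  · have hpot_none := hpot none
    simp only [Option.elim_none] at hpot_none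
    rw [hpot_none, lap_cnew_none, lap_cnew_none]
    simp only [ip, Option.elim_some, Option.elim_none, mul_ite, mul_one, mul_zero, hρ,
      sum_sum_ite_eq_mul, mul_sub, sum_sub_distrib, ← sum_mul]
    field_simp
    ring

/-- The Schrödinger operator `L'_p` of the network `Γ'` obtained by adding a new vertex `x'`
decomposes on `V` as `L_q + Σ P_{σ_i} − P_{σ,ε_{x'}}` and on `x'` as `−P_{ε_{x'},σ} + α P_{ε_{x'}}`. -/
theorem stmt7 {V : Type*} [Fintype V] [DecidableEq V] [Nonempty V] {m : ℕ}
    (c : V → V → ℝ) (ω : V → ℝ) (lam w' : ℝ) (x : Fin m → V) (a : Fin m → ℝ)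
    -- Γ is a finite connected network
    (hc_symm : ∀ y z, c y z = c z y)
    (hc_nonneg : ∀ y z, 0 ≤ c y z)
    (hc_diag : ∀ y, c y y = 0)
    (hconn : ∀ y z : V, Relation.ReflTransGen (fun s t => 0 < c s t) y z)
    -- ω a unit weight, λ ≥ 0, ω(x') > 0, conductances a_i > 0 to distinct vertices
    (hω_pos : ∀ y, 0 < ω y) (hω_unit : ∑ y, (ω y) ^ 2 = 1)
    (hlam : 0 ≤ lam) (hw' : 0 < w')
    (ha : ∀ i, 0 < a i) (hx : Function.Injective x) :
    ∀ u : Option V → ℝ,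
      (∀ y : V,
        lap (cnew c x a) u (some y)
          + (-(lap (cnew c x a)
                  (fun z => z.elim w' ω / Real.sqrt (1 + w' ^ 2)) (some y))
              / (ω y / Real.sqrt (1 + w' ^ 2)) + lam) * u (some y)
        = (lap c (fun z => u (some z)) y + (-(lap c ω y) / ω y + lam) * u (some y))
          + (∑ i, ip (fun z => (Real.sqrt (a i * ω (x i) * w') / ω (x i)) *
                (if z = x i then 1 else 0)) (fun z => u (some z))
              * ((Real.sqrt (a i * ω (x i) * w') / ω (x i)) *
                (if y = x i then 1 else 0)))
          - u none * (∑ i, a i * (if y = x i then 1 else 0))) ∧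
      (lap (cnew c x a) u none
          + (-(lap (cnew c x a)
                  (fun z => z.elim w' ω / Real.sqrt (1 + w' ^ 2)) none)
              / (w' / Real.sqrt (1 + w' ^ 2)) + lam) * u none
        = (lam + (1 / w' ^ 2) * ∑ i, Real.sqrt (a i * ω (x i) * w') ^ 2) * u none
          - ip (fun z => ∑ i, a i * (if z = x i then 1 else 0)) (fun z => u (some z))) :=
  stmt7_general c ω lam w' x a hω_pos hw' ha
end

section
/- With the notation of adding a vertex x' joined to x_1,…,x_m with conductances a_i > 0: let ρ_i = √(a_i ω(x_i) ω(x')), σ = Σ_{i=1}^m a_i ε_{x_i}, σ_i = (ρ_i/ω(x_i)) ε_{x_i}, α = λ + (1/ω(x')²) Σ ρ_i², and for 1 ≤ i < j ≤ m let σ_{ij} = (ρ_i ρ_j/ω(x')) (ε_{x_i}/ω(x_i) − ε_{x_j}/ω(x_j)). Then the rank-one projection P_σ decomposes as P_σ = (α−λ) Σ_{i=1}^m P_{σ_i} − Σ_{1≤i<j≤m} P_{σ_{ij}}. -/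
open Finset

noncomputable def eps {V : Type*} [DecidableEq V] (x : V) : V → ℝ :=
  fun y => if y = x then 1 else 0

lemma key {m : ℕ} (w' : ℝ) (hw' : w' ≠ 0) (a ω r U E : Fin m → ℝ)
    (hω : ∀ i, ω i ≠ 0) (hr : ∀ i, r i ^ 2 = a i * ω i * w') :
    (∑ i, a i * U i) * (∑ j, a j * E j)
    = (1 / w' ^ 2 * ∑ i, r i ^ 2) * (∑ i, (r i / ω i * U i) * (r i / ω i * E i))
      - ∑ i, ∑ j, if i < j then
          (r i * r j / w' * (U i / ω i - U j / ω j)) *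
          (r i * r j / w' * (E i / ω i - E j / ω j)) else 0 := by
  set g : Fin m → Fin m → ℝ := fun i j =>
    (r i * r j / w' * (U i / ω i - U j / ω j)) *
    (r i * r j / w' * (E i / ω i - E j / ω j)) with hgdef
  have hg : ∀ i j, g i j
      = a i * a j * ω i * ω j * ((U i / ω i - U j / ω j) * (E i / ω i - E j / ω j)) := by
    intro i j
    have h : g i j = r i ^ 2 * r j ^ 2 / w' ^ 2
        * ((U i / ω i - U j / ω j) * (E i / ω i - E j / ω j)) := by
      simp only [hgdef]; ring
    rw [h, hr i, hr j]
    have hwi := hω i; have hwj := hω j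
    field_simp
  have hgsymm : ∀ i j, g j i = g i j := by
    intro i j; rw [hg, hg]; ring
  have hgdiag : ∀ i, g i i = 0 := by
    intro i; rw [hg]; ring
  have htri : ∑ i, ∑ j, g i j = 2 * ∑ i, ∑ j, (if i < j then g i j else 0) := by
    have hpt : ∀ i j : Fin m, g i j
        = (if i < j then g i j else 0) + (if j < i then g i j else 0) := by
      intro i j
      rcases lt_trichotomy i j with h | h | h
      · simp [h, not_lt.2 h.le]
      · simp [h, hgdiag]
      · simp [h, not_lt.2 h.le]
    have hsplit : ∑ i, ∑ j, g i j
        = (∑ i, ∑ j, (if i < j then g i j else 0))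
          + (∑ i, ∑ j, (if j < i then g i j else 0)) := by
      rw [← Finset.sum_add_distrib]
      refine Finset.sum_congr rfl fun i _ => ?_
      rw [← Finset.sum_add_distrib]
      exact Finset.sum_congr rfl fun j _ => hpt i j
    have hswap : (∑ i, ∑ j, (if j < i then g i j else 0))
        = ∑ i, ∑ j, (if i < j then g i j else 0) := by
      rw [Finset.sum_comm]
      refine Finset.sum_congr rfl fun i _ => Finset.sum_congr rfl fun j _ => ?_
      rw [hgsymm]
    rw [hsplit, hswap]; ring
  -- double-sum forms
  have hLHS : (∑ i, a i * U i) * (∑ j, a j * E j)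
      = ∑ i, ∑ j, (a i * U i) * (a j * E j) := Finset.sum_mul_sum _ _ _ _
  have hQ : (1 / w' ^ 2 * ∑ i, r i ^ 2) * (∑ i, (r i / ω i * U i) * (r i / ω i * E i))
      = ∑ i, ∑ j, a i * ω i * a j / ω j * (U j * E j) := by
    have h0 : (1 / w' ^ 2 * ∑ i, r i ^ 2) = ∑ i, 1 / w' ^ 2 * r i ^ 2 :=
      Finset.mul_sum _ _ _
    rw [h0, Finset.sum_mul_sum]
    refine Finset.sum_congr rfl fun i _ => Finset.sum_congr rfl fun j _ => ?_
    have h : 1 / w' ^ 2 * r i ^ 2 * ((r j / ω j * U j) * (r j / ω j * E j))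
        = r i ^ 2 * r j ^ 2 / w' ^ 2 * (U j * E j) / ω j ^ 2 := by ring
    rw [h, hr i, hr j]
    have hwi := hω i; have hwj := hω j
    field_simp
  have hF : ∑ i, ∑ j, (2 * ((a i * U i) * (a j * E j))
      - 2 * (a i * ω i * a j / ω j * (U j * E j)) + g i j) = 0 := by
    have hsw : ∑ i, ∑ j, (2 * ((a i * U i) * (a j * E j))
        - 2 * (a i * ω i * a j / ω j * (U j * E j)) + g i j)
        = ∑ i, ∑ j, (2 * ((a j * U j) * (a i * E i))
        - 2 * (a j * ω j * a i / ω i * (U i * E i)) + g j i) := Finset.sum_comm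
    have h2 : (2:ℝ) * ∑ i, ∑ j, (2 * ((a i * U i) * (a j * E j))
        - 2 * (a i * ω i * a j / ω j * (U j * E j)) + g i j) = 0 := by
      rw [two_mul]
      nth_rewrite 2 [hsw]
      rw [← Finset.sum_add_distrib]
      rw [show (0:ℝ) = ∑ _i : Fin m, (0:ℝ) by simp]
      refine Finset.sum_congr rfl fun i _ => ?_
      rw [← Finset.sum_add_distrib]
      rw [show (0:ℝ) = ∑ _j : Fin m, (0:ℝ) by simp]
      refine Finset.sum_congr rfl fun j _ => ?_
      rw [hg, hgsymm, hg]
      have hwi := hω i; have hwj := hω j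
      field_simp
      ring
    linarith
  have hsplit2 : ∑ i, ∑ j, (2 * ((a i * U i) * (a j * E j))
      - 2 * (a i * ω i * a j / ω j * (U j * E j)) + g i j)
      = 2 * (∑ i, ∑ j, (a i * U i) * (a j * E j))
        - 2 * (∑ i, ∑ j, a i * ω i * a j / ω j * (U j * E j))
        + ∑ i, ∑ j, g i j := by
    simp [Finset.sum_add_distrib, Finset.sum_sub_distrib, Finset.mul_sum]
  rw [hLHS, hQ]
  rw [hsplit2] at hF
  linarith [htri]

lemma sum_eps {V : Type*} [Fintype V] [DecidableEq V] (y : V) (f : V → ℝ) :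
    ∑ z, eps y z * f z = f y := by simp [eps]

lemma ip1 {V : Type*} [Fintype V] [DecidableEq V] {m : ℕ} (a : Fin m → ℝ)
    (x : Fin m → V) (u : V → ℝ) :
    ip (fun z => ∑ i, a i * eps (x i) z) u = ∑ i, a i * u (x i) := by
  simp only [ip, Finset.sum_mul]
  rw [Finset.sum_comm]
  refine Finset.sum_congr rfl fun i _ => ?_
  simp_rw [mul_assoc, ← Finset.mul_sum, sum_eps]

lemma ip2 {V : Type*} [Fintype V] [DecidableEq V] (c : ℝ) (y : V) (u : V → ℝ) :
    ip (fun z => c • eps y z) u = c * u y := by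
  simp only [ip, smul_eq_mul, mul_assoc, ← Finset.mul_sum, sum_eps]

lemma ip2' {V : Type*} [Fintype V] [DecidableEq V] (c : ℝ) (y : V) (u : V → ℝ) :
    ip (fun z => c * eps y z) u = c * u y := by
  simp only [ip, mul_assoc, ← Finset.mul_sum, sum_eps]

lemma ip3 {V : Type*} [Fintype V] [DecidableEq V] (c d e : ℝ) (y y' : V) (u : V → ℝ) :
    ip (fun z => c * (eps y z / d - eps y' z / e)) u = c * (u y / d - u y' / e) := by
  simp only [ip]
  have h : ∀ z, (c * (eps y z / d - eps y' z / e)) * u z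
      = c / d * (eps y z * u z) - c / e * (eps y' z * u z) := by intro z; ring
  simp_rw [h, Finset.sum_sub_distrib, ← Finset.mul_sum, sum_eps]
  ring

/-- Decomposition of the rank-one projection `P_σ`, for `σ = Σ a_i ε_{x_i}`, as
`P_σ = (α−λ) Σ_i P_{σ_i} − Σ_{i<j} P_{σ_{ij}}`. -/
theorem stmt8 {V : Type*} [Fintype V] [DecidableEq V] {m : ℕ}
    (ω : V → ℝ) (lam w' : ℝ) (x : Fin m → V) (a : Fin m → ℝ)
    (hω_pos : ∀ y, 0 < ω y) (hlam : 0 ≤ lam) (hw' : 0 < w')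
    (ha : ∀ i, 0 < a i) (hx : Function.Injective x) :
    ∀ u : V → ℝ,
      ip (fun z => ∑ i, a i * eps (x i) z) u • (fun z => ∑ i, a i * eps (x i) z)
      = ((lam + (1 / w' ^ 2) * ∑ i, Real.sqrt (a i * ω (x i) * w') ^ 2) - lam) •
          (∑ i, ip (fun z => (Real.sqrt (a i * ω (x i) * w') / ω (x i)) • eps (x i) z) u
            • fun z => (Real.sqrt (a i * ω (x i) * w') / ω (x i)) • eps (x i) z)
        - ∑ i, ∑ j, if i < j then
            (ip (fun z => (Real.sqrt (a i * ω (x i) * w') *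
                  Real.sqrt (a j * ω (x j) * w') / w') *
                  (eps (x i) z / ω (x i) - eps (x j) z / ω (x j))) u
              • fun z => (Real.sqrt (a i * ω (x i) * w') *
                  Real.sqrt (a j * ω (x j) * w') / w') *
                  (eps (x i) z / ω (x i) - eps (x j) z / ω (x j)))
          else 0 := by
  intro u
  have hr : ∀ i, (Real.sqrt (a i * ω (x i) * w')) ^ 2 = a i * ω (x i) * w' := fun i =>
    Real.sq_sqrt (mul_nonneg (mul_nonneg (ha i).le (hω_pos _).le) hw'.le)
  funext z
  simp only [ip1, ip2, ip2', ip3, Pi.sub_apply, Pi.smul_apply, Finset.sum_apply, smul_eq_mul,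
    ite_apply, Pi.zero_apply, add_sub_cancel_left]
  exact key w' (ne_of_gt hw') a (fun i => ω (x i)) (fun i => Real.sqrt (a i * ω (x i) * w'))
    (fun i => u (x i)) (fun i => eps (x i) z) (fun i => ne_of_gt (hω_pos _)) hr
end

section
/- With the above vertex-addition setup, the operator S = L_q + Σ_{i=1}^m P_{σ_i} − (1/α) P_σ (the Schur complement of the α-block in L'_p) can be written as S = L_q + Σ_{k=1}^{m(m+1)/2} P_{π_k}, where π_k = √(λ/α) σ_k for k = 1,…,m, and π_k = (1/√α)(ρ_i ρ_j/ω(x'))(ε_{x_i}/ω(x_i) − ε_{x_j}/ω(x_j)) for k = (2m−1−i)i/2 + j with 1 ≤ i < j ≤ m. -/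
/-!
`P_τ u = ⟨τ, u⟩ τ` is the diagonal of the bilinear map `B_u (τ, τ') = ⟨τ, u⟩ τ'`. With
`f_i = ε_{x_i} / ω(x_i)` and `ρ_i² = a_i ω(x_i) ω(x')` one has `σ_i = ρ_i f_i`,
`σ = Σ_i (ρ_i² / ω(x')) f_i`, `π_k = √(λ/α) ρ_k f_k` for `k ≤ m`, and the dipole `π_k` is a multiple
of `f_i - f_j`. The claim thus becomes Lagrange's identity
`Σ_{i<j} p_i p_j B(f_i - f_j, f_i - f_j) = (Σ_i p_i) Σ_i p_i B(f_i, f_i) - B(Σ_i p_i f_i, Σ_i p_i f_i)`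
for `p_i = ρ_i² / ω(x')`, combined with `α = λ + Σ_i ρ_i² / ω(x')²`.
-/

open Finset

theorem Finset.sum_sum_eq_two_nsmul_sum_sum_ite_lt_add {ι N : Type*} [Fintype ι] [LinearOrder ι]
    [AddCommMonoid N] (g : ι → ι → N) (hg : ∀ i j, g i j = g j i) :
    ∑ i, ∑ j, g i j = 2 • ∑ i, ∑ j, (if i < j then g i j else 0) + ∑ i, g i i := by
  have hsplit : ∀ i j, g i j
      = (if i < j then g i j else 0) + (if j < i then g j i else 0) + if i = j then g i i else 0 := by
    intro i j
    rcases lt_trichotomy i j with h | rfl | h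
    · simp [h, h.not_gt, h.ne]
    · simp
    · simp [h, h.not_gt, h.ne', hg i j]
  simp_rw [sum_congr rfl fun i _ => sum_congr rfl fun j _ => hsplit i j, sum_add_distrib,
    sum_ite_eq, mem_univ, if_true]
  rw [sum_comm (f := fun i j => if j < i then g j i else 0), two_nsmul]

section Lagrange

variable {ι R M N : Type*} [Fintype ι] [LinearOrder ι] [CommRing R] [AddCommGroup M] [Module R M]
  [AddCommGroup N] [Module R N] [IsAddTorsionFree N]

theorem LinearMap.sum_sum_ite_lt_smul_apply_sub_sub (B : M →ₗ[R] M →ₗ[R] N) (p : ι → R) (f : ι → M) :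
    ∑ i, ∑ j, (if i < j then (p i * p j) • B (f i - f j) (f i - f j) else 0)
      = (∑ i, p i) • ∑ i, p i • B (f i) (f i) - B (∑ i, p i • f i) (∑ i, p i • f i) := by
  have hsymm := Finset.sum_sum_eq_two_nsmul_sum_sum_ite_lt_add
    (fun i j => (p i * p j) • B (f i - f j) (f i - f j)) fun i j => by
      simp only [mul_comm (p i), ← neg_sub (f i) (f j), map_neg, LinearMap.neg_apply, neg_neg]
  simp only [sub_self, map_zero, smul_zero, sum_const_zero, add_zero] at hsymm
  have hexpand : ∀ i j, (p i * p j) • B (f i - f j) (f i - f j)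
      = p j • p i • B (f i) (f i) + p i • p j • B (f j) (f j)
        - B (p i • f i) (p j • f j) - B (p j • f j) (p i • f i) := by
    intro i j
    simp only [map_sub, map_smul, LinearMap.sub_apply, LinearMap.smul_apply]
    module
  apply nsmul_right_injective (M := N) two_ne_zero
  dsimp only
  rw [← hsymm]
  simp only [hexpand, sum_add_distrib, sum_sub_distrib, ← sum_smul, ← smul_sum, ← map_sum,
    ← LinearMap.sum_apply]
  abel

end Lagrange

section Schur

variable {ι K M N : Type*} [Fintype ι] [LinearOrder ι] [Field K] [LinearOrder K]
  [IsStrictOrderedRing K] [AddCommGroup M] [Module K M] [AddCommGroup N] [Module K N]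
  [IsAddTorsionFree N]

theorem LinearMap.sum_sq_smul_sub_inv_smul_eq (B : M →ₗ[K] M →ₗ[K] N) (ρ : ι → K) (f : ι → M)
    {lam w' α : K} (hlam : 0 ≤ lam) (hw' : w' ≠ 0) (hα : α = lam + 1 / w' ^ 2 * ∑ i, ρ i ^ 2) :
    ∑ i, ρ i ^ 2 • B (f i) (f i) - α⁻¹ • B (∑ i, (ρ i ^ 2 / w') • f i) (∑ i, (ρ i ^ 2 / w') • f i)
      = ∑ i, (lam / α * ρ i ^ 2) • B (f i) (f i)
        + ∑ i, ∑ j, if i < j then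
            (α⁻¹ * (ρ i ^ 2 * ρ j ^ 2 / w' ^ 2)) • B (f i - f j) (f i - f j) else 0 := by
  rcases eq_or_ne α 0 with hα0 | hα0
  · have hsum : 1 / w' ^ 2 * ∑ i, ρ i ^ 2 = 0 := by
      have : 0 ≤ 1 / w' ^ 2 * ∑ i, ρ i ^ 2 := by positivity
      linarith
    have hρ : ∀ i, ρ i = 0 := by
      simpa [hw', sum_eq_zero_iff_of_nonneg, sq_nonneg] using hsum
    simp [hρ]
  have hpairs : (∑ i, ∑ j, if i < j then
        (α⁻¹ * (ρ i ^ 2 * ρ j ^ 2 / w' ^ 2)) • B (f i - f j) (f i - f j) else 0)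
      = α⁻¹ • ((∑ i, ρ i ^ 2 / w') • ∑ i, (ρ i ^ 2 / w') • B (f i) (f i)
          - B (∑ i, (ρ i ^ 2 / w') • f i) (∑ i, (ρ i ^ 2 / w') • f i)) := by
    rw [← B.sum_sum_ite_lt_smul_apply_sub_sub, smul_sum]
    refine sum_congr rfl fun i _ => ?_
    rw [smul_sum]
    refine sum_congr rfl fun j _ => ?_
    rw [smul_ite, smul_zero, smul_smul]
    ring_nf
  set X := ∑ i, ρ i ^ 2 • B (f i) (f i)
  have hcoef : lam / α + α⁻¹ * ((∑ i, ρ i ^ 2) / w') * w'⁻¹ = 1 := by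
    field_simp
    rw [hα]
    field_simp
  rw [hpairs, ← sum_div,
    show ∑ i, (ρ i ^ 2 / w') • B (f i) (f i) = w'⁻¹ • X by simp [X, smul_sum, smul_smul, div_eq_inv_mul],
    show ∑ i, (lam / α * ρ i ^ 2) • B (f i) (f i) = (lam / α) • X by simp [X, smul_sum, mul_smul]]
  linear_combination (norm := module) -hcoef • X

end Schur

def projBilin {V : Type*} [Fintype V] (u : V → ℝ) : (V → ℝ) →ₗ[ℝ] (V → ℝ) →ₗ[ℝ] (V → ℝ) :=
  LinearMap.lsmul ℝ (V → ℝ) ∘ₗ (dotProductBilin ℝ ℝ).flip u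

theorem projBilin_apply {V : Type*} [Fintype V] (u τ τ' : V → ℝ) :
    projBilin u τ τ' = ip τ u • τ' :=
  rfl

theorem stmt9_general {V : Type*} [Fintype V] [DecidableEq V] {m : ℕ}
    (c : V → V → ℝ) (ω : V → ℝ) (lam w' : ℝ) (x : Fin m → V) (a : Fin m → ℝ)
    (hω_pos : ∀ y, 0 < ω y)
    (hlam : 0 ≤ lam) (hw' : 0 < w')
    (ha : ∀ i, 0 < a i) :
    ∀ u : V → ℝ,
      (fun y => lap c u y + (-(lap c ω y) / ω y + lam) * u y)
        + (∑ i, ip (fun z => (Real.sqrt (a i * ω (x i) * w') / ω (x i)) • eps (x i) z) u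
            • fun z => (Real.sqrt (a i * ω (x i) * w') / ω (x i)) • eps (x i) z)
        - (1 / (lam + (1 / w' ^ 2) * ∑ i, Real.sqrt (a i * ω (x i) * w') ^ 2)) •
            (ip (fun z => ∑ i, a i * eps (x i) z) u • fun z => ∑ i, a i * eps (x i) z)
      = (fun y => lap c u y + (-(lap c ω y) / ω y + lam) * u y)
        + (∑ i, ip (fun z =>
              Real.sqrt (lam / (lam + (1 / w' ^ 2) * ∑ r, Real.sqrt (a r * ω (x r) * w') ^ 2)) *
                ((Real.sqrt (a i * ω (x i) * w') / ω (x i)) * eps (x i) z)) u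
            • fun z =>
              Real.sqrt (lam / (lam + (1 / w' ^ 2) * ∑ r, Real.sqrt (a r * ω (x r) * w') ^ 2)) *
                ((Real.sqrt (a i * ω (x i) * w') / ω (x i)) * eps (x i) z))
        + ∑ i, ∑ j, (if i < j then
            (ip (fun z =>
                (1 / Real.sqrt (lam + (1 / w' ^ 2) * ∑ r, Real.sqrt (a r * ω (x r) * w') ^ 2)) *
                  (Real.sqrt (a i * ω (x i) * w') * Real.sqrt (a j * ω (x j) * w') / w') *
                  (eps (x i) z / ω (x i) - eps (x j) z / ω (x j))) u
              • fun z =>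
                (1 / Real.sqrt (lam + (1 / w' ^ 2) * ∑ r, Real.sqrt (a r * ω (x r) * w') ^ 2)) *
                  (Real.sqrt (a i * ω (x i) * w') * Real.sqrt (a j * ω (x j) * w') / w') *
                  (eps (x i) z / ω (x i) - eps (x j) z / ω (x j)))
          else 0) := by
  intro u
  obtain ⟨ρ, hρ⟩ : ∃ ρ : Fin m → ℝ, ∀ i, √(a i * ω (x i) * w') = ρ i := ⟨_, fun _ => rfl⟩
  have hρsq : ∀ i, ρ i ^ 2 = a i * ω (x i) * w' := fun i => by
    rw [← hρ, Real.sq_sqrt (mul_pos (mul_pos (ha i) (hω_pos (x i))) hw').le]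
  simp only [hρ]
  set α := lam + 1 / w' ^ 2 * ∑ r, ρ r ^ 2 with hα
  have hα0 : 0 ≤ α := by positivity
  let f : Fin m → V → ℝ := fun i z => eps (x i) z / ω (x i)
  have hσ : ∀ i, (fun z => (ρ i / ω (x i)) • eps (x i) z) = ρ i • f i := fun i => by
    funext z; simp only [f, Pi.smul_apply, smul_eq_mul]; ring
  have hσsum : (fun z => ∑ i, a i * eps (x i) z) = ∑ i, (ρ i ^ 2 / w') • f i := by
    funext z
    simp only [f, hρsq, Finset.sum_apply, Pi.smul_apply, smul_eq_mul]
    refine sum_congr rfl fun i _ => ?_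
    have := (hω_pos (x i)).ne'
    field_simp
  have hπ : ∀ i, (fun z => √(lam / α) * (ρ i / ω (x i) * eps (x i) z))
      = (√(lam / α) * ρ i) • f i := fun i => by
    funext z; simp only [f, Pi.smul_apply, smul_eq_mul]; ring
  have hdip : ∀ i j, (fun z => 1 / √α * (ρ i * ρ j / w')
        * (eps (x i) z / ω (x i) - eps (x j) z / ω (x j)))
      = (1 / √α * (ρ i * ρ j / w')) • (f i - f j) := fun i j => by
    funext z; simp only [f, Pi.smul_apply, Pi.sub_apply, smul_eq_mul]
  simp only [hσ, hσsum, hπ, hdip, ← projBilin_apply]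
  simp only [map_smul, LinearMap.smul_apply, smul_smul,
    ← sq, mul_pow, div_pow, inv_pow, Real.sq_sqrt hα0, Real.sq_sqrt (div_nonneg hlam hα0), one_div]
  rw [add_sub_assoc, (projBilin u).sum_sq_smul_sub_inv_smul_eq ρ f hlam hw'.ne' hα, add_assoc]

/-- The Schur complement `S = L_q + Σ_i P_{σ_i} − (1/α) P_σ` of the `α`-block of `L'_p`
can be written as `S = L_q + Σ_k P_{π_k}`, where `π_k = √(λ/α) σ_k` for `k ≤ m` and the
remaining `π_k` are the `m(m−1)/2` scaled dipoles. -/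
theorem stmt9 {V : Type*} [Fintype V] [DecidableEq V] [Nonempty V] {m : ℕ}
    (c : V → V → ℝ) (ω : V → ℝ) (lam w' : ℝ) (x : Fin m → V) (a : Fin m → ℝ)
    (hc_symm : ∀ y z, c y z = c z y)
    (hc_nonneg : ∀ y z, 0 ≤ c y z)
    (hc_diag : ∀ y, c y y = 0)
    (hconn : ∀ y z : V, Relation.ReflTransGen (fun s t => 0 < c s t) y z)
    (hω_pos : ∀ y, 0 < ω y) (hω_unit : ∑ y, (ω y) ^ 2 = 1)
    (hlam : 0 ≤ lam) (hw' : 0 < w')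
    (ha : ∀ i, 0 < a i) (hx : Function.Injective x) :
    ∀ u : V → ℝ,
      (fun y => lap c u y + (-(lap c ω y) / ω y + lam) * u y)
        + (∑ i, ip (fun z => (Real.sqrt (a i * ω (x i) * w') / ω (x i)) • eps (x i) z) u
            • fun z => (Real.sqrt (a i * ω (x i) * w') / ω (x i)) • eps (x i) z)
        - (1 / (lam + (1 / w' ^ 2) * ∑ i, Real.sqrt (a i * ω (x i) * w') ^ 2)) •
            (ip (fun z => ∑ i, a i * eps (x i) z) u • fun z => ∑ i, a i * eps (x i) z)
      = (fun y => lap c u y + (-(lap c ω y) / ω y + lam) * u y)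
        + (∑ i, ip (fun z =>
              Real.sqrt (lam / (lam + (1 / w' ^ 2) * ∑ r, Real.sqrt (a r * ω (x r) * w') ^ 2)) *
                ((Real.sqrt (a i * ω (x i) * w') / ω (x i)) * eps (x i) z)) u
            • fun z =>
              Real.sqrt (lam / (lam + (1 / w' ^ 2) * ∑ r, Real.sqrt (a r * ω (x r) * w') ^ 2)) *
                ((Real.sqrt (a i * ω (x i) * w') / ω (x i)) * eps (x i) z))
        + ∑ i, ∑ j, (if i < j then
            (ip (fun z =>
                (1 / Real.sqrt (lam + (1 / w' ^ 2) * ∑ r, Real.sqrt (a r * ω (x r) * w') ^ 2)) *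
                  (Real.sqrt (a i * ω (x i) * w') * Real.sqrt (a j * ω (x j) * w') / w') *
                  (eps (x i) z / ω (x i) - eps (x j) z / ω (x j))) u
              • fun z =>
                (1 / Real.sqrt (lam + (1 / w' ^ 2) * ∑ r, Real.sqrt (a r * ω (x r) * w') ^ 2)) *
                  (Real.sqrt (a i * ω (x i) * w') * Real.sqrt (a j * ω (x j) * w') / w') *
                  (eps (x i) z / ω (x i) - eps (x j) z / ω (x j)))
          else 0) :=
  stmt9_general c ω lam w' x a hω_pos hlam hw' ha
end

section
/- With the vertex-addition setup and the dipole perturbations π_ℓ for ℓ = (2m−1−i)i/2 + j (1 ≤ i < j ≤ m), the matrix A = (⟨G(π_ℓ),π_k⟩) satisfies for k = 1,…,m: A_{k,ℓ} = (√λ ρ_k ρ_i ρ_j/(α ω(x'))) [G_{λ,ω}(x_k,x_i)/(ω(x_k)ω(x_i)) − G_{λ,ω}(x_k,x_j)/(ω(x_k)ω(x_j))]. -/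
open Finset

lemma ip_smul_eps {V : Type*} [Fintype V] [DecidableEq V] (u : V → ℝ) (s : ℝ) (y : V) :
    ip u (fun z => s * eps y z) = s * u y := by
  unfold ip eps
  rw [Finset.sum_eq_single y]
  · simp [mul_comm]
  · intro b _ hb; simp [hb]
  · simp

/-- For `k = 1,…,m` and the dipole perturbation `π_ℓ` associated to a pair `i < j`,
`⟨G(π_ℓ),π_k⟩ = (√λ ρ_k ρ_i ρ_j/(α ω(x'))) [G_{λ,ω}(x_k,x_i)/(ω(x_k)ω(x_i)) −
G_{λ,ω}(x_k,x_j)/(ω(x_k)ω(x_j))]`. -/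
theorem stmt11 {V : Type*} [Fintype V] [DecidableEq V] [Nonempty V] {m : ℕ}
    (c : V → V → ℝ) (ω : V → ℝ) (lam w' : ℝ) (x : Fin m → V) (a : Fin m → ℝ)
    (G : (V → ℝ) →ₗ[ℝ] (V → ℝ))
    (hc_symm : ∀ y z, c y z = c z y)
    (hc_nonneg : ∀ y z, 0 ≤ c y z)
    (hc_diag : ∀ y, c y y = 0)
    (hconn : ∀ y z : V, Relation.ReflTransGen (fun s t => 0 < c s t) y z)
    (hω_pos : ∀ y, 0 < ω y) (hω_unit : ∑ y, (ω y) ^ 2 = 1)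
    (hlam : 0 ≤ lam) (hw' : 0 < w') (hm : 0 < m)
    (ha : ∀ i, 0 < a i) (hx : Function.Injective x)
    -- G is the orthogonal Green operator of L_q with q = q_ω + λ
    (hGF : ∀ u, G (fun y => lap c u y + (-(lap c ω y) / ω y + lam) * u y)
        = u - ip ω u • ω)
    (hFG : ∀ u, (fun y => lap c (G u) y + (-(lap c ω y) / ω y + lam) * G u y)
        = u - ip ω u • ω)
    (hGω : G ω = 0)
    (hGorth : ∀ u, ip (G u) ω = 0) :
    ∀ k i j : Fin m, i < j →
      ip (G (fun z =>
          (1 / Real.sqrt (lam + (1 / w' ^ 2) * ∑ r, Real.sqrt (a r * ω (x r) * w') ^ 2)) *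
            (Real.sqrt (a i * ω (x i) * w') * Real.sqrt (a j * ω (x j) * w') / w') *
            (eps (x i) z / ω (x i) - eps (x j) z / ω (x j))))
        (fun z =>
          Real.sqrt (lam / (lam + (1 / w' ^ 2) * ∑ r, Real.sqrt (a r * ω (x r) * w') ^ 2)) *
            ((Real.sqrt (a k * ω (x k) * w') / ω (x k)) * eps (x k) z))
      = Real.sqrt lam * Real.sqrt (a k * ω (x k) * w') * Real.sqrt (a i * ω (x i) * w')
          * Real.sqrt (a j * ω (x j) * w')
          / ((lam + (1 / w' ^ 2) * ∑ r, Real.sqrt (a r * ω (x r) * w') ^ 2) * w')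
          * (G (eps (x i)) (x k) / (ω (x k) * ω (x i))
              - G (eps (x j)) (x k) / (ω (x k) * ω (x j))) := by
  intro k i j hij
  set α : ℝ := lam + (1 / w' ^ 2) * ∑ r, Real.sqrt (a r * ω (x r) * w') ^ 2 with hα
  have hαpos : 0 < α := by
    have hsum : 0 < ∑ r, Real.sqrt (a r * ω (x r) * w') ^ 2 := by
      apply Finset.sum_pos
      · intro r _
        have hr : 0 < a r * ω (x r) * w' :=
          mul_pos (mul_pos (ha r) (hω_pos (x r))) hw'
        exact pow_pos (Real.sqrt_pos.mpr hr) 2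
      · have : Nonempty (Fin m) := Fin.pos_iff_nonempty.mp hm
        exact Finset.univ_nonempty
    have h2 : 0 < (1 / w' ^ 2) * ∑ r, Real.sqrt (a r * ω (x r) * w') ^ 2 := by positivity
    exact add_pos_of_nonneg_of_pos hlam h2
  set ρi := Real.sqrt (a i * ω (x i) * w')
  set ρj := Real.sqrt (a j * ω (x j) * w')
  set ρk := Real.sqrt (a k * ω (x k) * w')
  set sα := Real.sqrt α with hsα
  have hsαpos : 0 < sα := Real.sqrt_pos.mpr hαpos
  have hsq : sα * sα = α := Real.mul_self_sqrt hαpos.le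
  clear_value α
  set C : ℝ := (1 / sα) * (ρi * ρj / w') with hC
  have hfun : (fun z => C * (eps (x i) z / ω (x i) - eps (x j) z / ω (x j)))
      = (C / ω (x i)) • eps (x i) - (C / ω (x j)) • eps (x j) := by
    funext z
    simp [Pi.sub_apply, Pi.smul_apply, smul_eq_mul]
    ring
  rw [show (fun z => C * (eps (x i) z / ω (x i) - eps (x j) z / ω (x j))) = _ from hfun,
    map_sub, map_smul, map_smul]
  have hDiv : Real.sqrt (lam / α) = Real.sqrt lam / sα := Real.sqrt_div hlam α
  rw [hDiv]
  have hip : ip ((C / ω (x i)) • G (eps (x i)) - (C / ω (x j)) • G (eps (x j)))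
      (fun z => Real.sqrt lam / sα * (ρk / ω (x k) * eps (x k) z))
      = (Real.sqrt lam / sα * (ρk / ω (x k))) *
        ((C / ω (x i)) * G (eps (x i)) (x k) - (C / ω (x j)) * G (eps (x j)) (x k)) := by
    have := ip_smul_eps ((C / ω (x i)) • G (eps (x i)) - (C / ω (x j)) • G (eps (x j)))
      (Real.sqrt lam / sα * (ρk / ω (x k))) (x k)
    simp only [mul_assoc] at this ⊢
    rw [this]
    simp [Pi.sub_apply, Pi.smul_apply, smul_eq_mul]
  rw [hip]
  have hωi := (hω_pos (x i)).ne'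
  have hωj := (hω_pos (x j)).ne'
  have hωk := (hω_pos (x k)).ne'
  have hexp : ∀ (t ωt : ℝ), ωt ≠ 0 →
      Real.sqrt lam / sα * (ρk / ω (x k)) * (C / ωt * t)
        = Real.sqrt lam * ρk * ρi * ρj / (α * w') * (t / (ω (x k) * ωt)) := by
    intro t ωt hωt
    rw [hC, ← hsq]
    field_simp
  rw [mul_sub, hexp _ _ hωi, hexp _ _ hωj, ← mul_sub]
end
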